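/- Let q ≥ 2, n ≥ 1, let 𝐚 be a quasicode of length n over an alphabet of size q, and let T = {b_1 < b_2 < ⋯ < b_t} be a pair covering of 𝐚. Suppose (a) 𝐚 is a (t−1)-design, and (b) for each 1 ≤ j ≤ t−1 the function q_j(x) = Π_{i=0}^{j−1} (b_{t−i} − x) on {0,1,…,n} is positive definite. Then 𝐚 is a universally optimal quasicode. -/

import Mathlib

/-!
Let `h` be the Newton interpolant of `f` at the nodes `b (t - 1), …, b 0`. Divided differences of
a completely monotonic function on `m + 1` points have sign `(-1) ^ m`. Since the pair covering
makes `(-1) ^ t ∏ᵢ (x - b i) ≥ 0` at every integer `x ∈ [0, n]`, the remainder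
`f x - h x = f[x, b (t - 1), …, b 0] ∏ᵢ (x - b i)` is nonnegative on `{0, …, n}` and vanishes on
the support of `A`; hence `E_f(A) - E_h(A) = f 0 - h 0 ≤ E_f(B) - E_h(B)` for every quasicode `B`.

In Newton form, `h = ∑ₖ (-1) ^ k f[b (t - 1), …, b (t - 1 - k)] qₖ` is a nonnegative combination
of the `qₖ`, `k < t`. Each `qₖ` is positive definite of degree `k ≤ t - 1`, so its Krawtchouk
coefficients `eⱼ` are nonnegative and vanish for `j > k`; as `A` is a `(t - 1)`-design,
`E_{qₖ}(A) = e₀ N ≤ E_{qₖ}(B)`.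
-/

open Finset

/-- The Krawtchouk polynomial `K_k(x; n, q)` evaluated at a natural number `x`. -/
noncomputable def kraw (n q k x : ℕ) : ℝ :=
  ∑ j ∈ Finset.range (k+1),
    (-1 : ℝ)^j * ((q : ℝ) - 1)^(k-j) * (x.choose j : ℝ) * ((n-x).choose (k-j) : ℝ)

/-- The finite difference operator `Δf(m) = f(m+1) − f(m)`. -/
def fdiff (f : ℕ → ℝ) : ℕ → ℝ := fun m => f (m+1) - f m

/-- `f` is completely monotonic on `{a, a+1, …, b}`:
`(−1)^k Δ^k f(i) ≥ 0` whenever `k ≥ 0` and `a ≤ i ≤ b − k`. -/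
def CompletelyMonotonicOn (f : ℕ → ℝ) (a b : ℕ) : Prop :=
  ∀ k i, a ≤ i → i + k ≤ b → 0 ≤ (-1 : ℝ)^k * (fdiff^[k] f) i

/-- A quasicode of length `n` and size `N` over an alphabet of size `q`,
recorded via its entries `A 0, …, A n`. -/
structure IsQuasicode (q n : ℕ) (N : ℝ) (A : ℕ → ℝ) : Prop where
  nonneg : ∀ i, i ≤ n → 0 ≤ A i
  delsarte : ∀ j, j ≤ n → 0 ≤ ∑ i ∈ Finset.range (n+1), A i * kraw n q j i
  size : ∑ i ∈ Finset.range (n+1), A i = N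
  zeroth : A 0 = 1

/-- A universally optimal quasicode: a quasicode that minimizes `f`-energy
among all quasicodes of the same length and size, for every completely
monotonic potential function `f`. -/
def IsUOQuasicode (q n : ℕ) (N : ℝ) (A : ℕ → ℝ) : Prop :=
  IsQuasicode q n N A ∧
    ∀ f : ℕ → ℝ, CompletelyMonotonicOn f 0 n →
      ∀ B : ℕ → ℝ, IsQuasicode q n N B →
        ∑ i ∈ Finset.range (n+1), f i * A i ≤ ∑ i ∈ Finset.range (n+1), f i * B i

/-- The quasicode `A` (of size `N`) is a `t`-design: `A^⊥_j = 0` for `1 ≤ j ≤ t`. -/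
def IsDesign (q n t : ℕ) (A : ℕ → ℝ) : Prop :=
  ∀ j, 1 ≤ j → j ≤ t → ∑ i ∈ Finset.range (n+1), A i * kraw n q j i = 0

/-- `h : {0,…,n} → ℝ` is positive definite: its (unique) Krawtchouk
coefficients are all nonnegative. -/
def PositiveDefinite (q n : ℕ) (h : ℕ → ℝ) : Prop :=
  ∃ c : ℕ → ℝ, (∀ j, j ≤ n → 0 ≤ c j) ∧
    ∀ i, i ≤ n → h i = ∑ j ∈ Finset.range (n+1), c j * kraw n q j i

open scoped Classical in
/-- The support of a quasicode: `{i > 0 : A i ≠ 0}`. -/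
noncomputable def supp (n : ℕ) (A : ℕ → ℝ) : Finset ℕ :=
  (Finset.Icc 1 n).filter (fun i => A i ≠ 0)

/-- `b 0 < b 1 < ⋯ < b (t-1)` lists a pair covering of the quasicode `A`:
a subset of `{1,…,n}` containing the support of `A`, whose elements pair up
into consecutive pairs, except that if `t` is odd the last element is `n`. -/
structure IsPairCovering (n t : ℕ) (A : ℕ → ℝ) (b : ℕ → ℕ) : Prop where
  mono : ∀ i j, i < j → j < t → b i < b j
  mem : ∀ i, i < t → 1 ≤ b i ∧ b i ≤ n
  covers : ∀ i, 1 ≤ i → i ≤ n → A i ≠ 0 → ∃ k, k < t ∧ b k = i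
  pairs : ∀ i, 2*i+1 < t → b (2*i) + 1 = b (2*i+1)
  odd_end : Odd t → b (t-1) = n

noncomputable def nodeProd (S : Finset ℕ) (x : ℕ) : ℝ := ∏ j ∈ S, ((x : ℝ) - j)

noncomputable def divDiff (f : ℕ → ℝ) (S : Finset ℕ) : ℝ :=
  ∑ i ∈ S, f i / nodeProd (S.erase i) i

lemma nodeProd_ne_zero {S : Finset ℕ} {x : ℕ} (hx : x ∉ S) : nodeProd S x ≠ 0 :=
  prod_ne_zero_iff.2 fun j hj =>
    sub_ne_zero.2 <| Nat.cast_injective.ne <| by rintro rfl; exact hx hj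

lemma nodeProd_insert {S : Finset ℕ} {a : ℕ} (ha : a ∉ S) (x : ℕ) :
    nodeProd (insert a S) x = ((x : ℝ) - a) * nodeProd S x :=
  prod_insert ha

lemma divDiff_singleton (f : ℕ → ℝ) (x : ℕ) : divDiff f {x} = f x := by
  simp [divDiff, nodeProd]

lemma divDiff_insert (f : ℕ → ℝ) {S : Finset ℕ} {a : ℕ} (ha : a ∉ S) :
    divDiff f (insert a S) =
      f a / nodeProd S a + ∑ i ∈ S, f i / (((i : ℝ) - a) * nodeProd (S.erase i) i) := by
  rw [divDiff, sum_insert ha, erase_insert ha]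
  congr 1
  refine sum_congr rfl fun i hi => ?_
  have hia : a ≠ i := by rintro rfl; exact ha hi
  rw [erase_insert_of_ne hia, nodeProd_insert (fun h => ha (mem_of_mem_erase h))]

lemma divDiff_insert_insert (f : ℕ → ℝ) {S : Finset ℕ} {a b : ℕ} (ha : a ∉ S) (hb : b ∉ S)
    (hab : a ≠ b) :
    divDiff f (insert a (insert b S)) * ((a : ℝ) - b) =
      divDiff f (insert a S) - divDiff f (insert b S) := by
  have hne : ∀ {u v : ℕ}, u ≠ v → (u : ℝ) - v ≠ 0 := fun h =>
    sub_ne_zero.2 (Nat.cast_injective.ne h)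
  rw [divDiff_insert f (by simp [hab, ha]), divDiff_insert f ha, divDiff_insert f hb,
    sum_insert hb, erase_insert hb, nodeProd_insert hb]
  have hS : ∀ i ∈ S, f i / (((i : ℝ) - a) * nodeProd ((insert b S).erase i) i) * ((a : ℝ) - b) =
      f i / (((i : ℝ) - a) * nodeProd (S.erase i) i) -
        f i / (((i : ℝ) - b) * nodeProd (S.erase i) i) := by
    intro i hi
    have hbi : b ≠ i := by rintro rfl; exact hb hi
    rw [erase_insert_of_ne hbi, nodeProd_insert (fun h => hb (mem_of_mem_erase h))]
    have := nodeProd_ne_zero (notMem_erase i S)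
    have := hne (show i ≠ a by rintro rfl; exact ha hi)
    have := hne hbi.symm
    field_simp
    ring
  have := hne hab
  have := hne hab.symm
  have := nodeProd_ne_zero ha
  have := nodeProd_ne_zero hb
  rw [add_mul, add_mul, sum_mul, sum_congr rfl hS, sum_sub_distrib]
  field_simp
  ring

lemma fdiff_iterate_succ (f : ℕ → ℝ) (k m : ℕ) :
    fdiff^[k + 1] f m = fdiff^[k] f (m + 1) - fdiff^[k] f m := by
  rw [Function.iterate_succ_apply']
  rfl

lemma divDiff_Icc (f : ℕ → ℝ) (m k : ℕ) :
    divDiff f (Icc m (m + k)) = fdiff^[k] f m / k.factorial := by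
  induction k generalizing m with
  | zero => simp [divDiff_singleton]
  | succ k ih =>
    have key := divDiff_insert_insert f (S := Icc (m + 1) (m + k)) (a := m + k + 1) (b := m)
      (by simp) (by simp) (by omega)
    rw [show insert (m + k + 1) (insert m (Icc (m + 1) (m + k))) = Icc m (m + (k + 1)) by
        ext; simp; omega,
      show insert (m + k + 1) (Icc (m + 1) (m + k)) = Icc (m + 1) (m + 1 + k) by ext; simp; omega,
      show insert m (Icc (m + 1) (m + k)) = Icc m (m + k) by ext; simp; omega,
      ih, ih, ← sub_div, ← fdiff_iterate_succ] at key
    rw [Nat.factorial_succ, Nat.cast_mul, ← div_div, div_right_comm, ← key]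
    push_cast
    field_simp
    ring

lemma divDiff_mul_sub_eq (f : ℕ → ℝ) {S : Finset ℕ} {a c y : ℕ} (ha : a ∈ S) (hc : c ∈ S)
    (hy : y ∉ S) :
    divDiff f S * ((c : ℝ) - a) =
      ((y : ℝ) - a) * divDiff f (insert y (S.erase c)) +
        ((c : ℝ) - y) * divDiff f (insert y (S.erase a)) := by
  have split : ∀ {x}, x ∈ S → divDiff f (insert x (insert y (S.erase x))) * ((x : ℝ) - y) =
      divDiff f (insert x (S.erase x)) - divDiff f (insert y (S.erase x)) := fun hx =>
    divDiff_insert_insert f (notMem_erase _ _) (fun h => hy (mem_of_mem_erase h))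
      (by rintro rfl; exact hy hx)
  have hc' := split hc
  have ha' := split ha
  rw [insert_comm, insert_erase hc] at hc'
  rw [insert_comm, insert_erase ha] at ha'
  linear_combination ((a : ℝ) - y) * hc' + ((y : ℝ) - c) * ha'

lemma max'_sub_min'_le_of_subset_Icc {S : Finset ℕ} (hS : S.Nonempty) {u v : ℕ}
    (h : S ⊆ Icc u v) : S.max' hS - S.min' hS ≤ v - u := by
  have hmax := mem_Icc.1 (h (S.max'_mem hS))
  have hmin := mem_Icc.1 (h (S.min'_mem hS))
  omega

lemma CompletelyMonotonicOn.neg_one_pow_mul_divDiff_Icc_nonneg {f : ℕ → ℝ} {a b : ℕ}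
    (hf : CompletelyMonotonicOn f a b) {m k : ℕ} (ham : a ≤ m) (hmb : m + k ≤ b) :
    0 ≤ (-1 : ℝ) ^ k * divDiff f (Icc m (m + k)) := by
  rw [divDiff_Icc, mul_div_assoc']
  exact div_nonneg (hf k m ham hmb) (Nat.cast_nonneg _)

lemma card_insert_erase_of_mem_of_notMem {α : Type*} [DecidableEq α] {S : Finset α} {x y : α}
    (hx : x ∈ S) (hy : y ∉ S) : #(insert y (S.erase x)) = #S := by
  rw [card_insert_of_notMem (fun h => hy (mem_of_mem_erase h)), card_erase_add_one hx]

theorem CompletelyMonotonicOn.neg_one_pow_mul_divDiff_nonneg {f : ℕ → ℝ} {a b : ℕ}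
    (hf : CompletelyMonotonicOn f a b) {S : Finset ℕ} (hS : S.Nonempty) (hSab : S ⊆ Icc a b) :
    0 ≤ (-1 : ℝ) ^ (#S - 1) * divDiff f S := by
  induction hd : S.max' hS - S.min' hS using Nat.strong_induction_on generalizing S with
  | _ d ih =>
  set lo := S.min' hS
  set hi := S.max' hS
  have hlo : lo ∈ S := S.min'_mem hS
  have hhi : hi ∈ S := S.max'_mem hS
  have hsub : S ⊆ Icc lo hi := fun x hx => mem_Icc.2 ⟨S.min'_le x hx, S.le_max' x hx⟩
  have hlohi : lo ≤ hi := S.min'_le hi hhi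
  have hIcc : Icc lo hi ⊆ Icc a b :=
    Icc_subset_Icc (mem_Icc.1 (hSab hlo)).1 (mem_Icc.1 (hSab hhi)).2
  by_cases hfull : Icc lo hi ⊆ S
  · rw [show S = Icc lo (lo + d) by rw [Subset.antisymm hsub hfull]; congr; omega,
      Nat.card_Icc, show lo + d + 1 - lo - 1 = d by omega]
    have := mem_Icc.1 (hIcc (mem_Icc.2 ⟨hlohi, le_rfl⟩))
    exact hf.neg_one_pow_mul_divDiff_Icc_nonneg (mem_Icc.1 (hSab hlo)).1 (by omega)
  -- Filling a gap `y` of `S` writes `f[S]` as a positive combination of divided differences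
  -- over sets of the same size and smaller spread.
  obtain ⟨y, hy, hyS⟩ := not_subset.1 hfull
  have hy' := mem_Icc.1 hy
  have hloy : lo < y := lt_of_le_of_ne hy'.1 (by rintro rfl; exact hyS hlo)
  have hyhi : y < hi := lt_of_le_of_ne hy'.2 (by rintro rfl; exact hyS hhi)
  have hsign : ∀ x ∈ S, ∀ u v, u ≤ y → y ≤ v → v - u < d →
      (∀ z ∈ S, z ≠ x → u ≤ z ∧ z ≤ v) →
      0 ≤ (-1 : ℝ) ^ (#S - 1) * divDiff f (insert y (S.erase x)) := by
    intro x hx u v hu hv hlt hSuv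
    have hne := insert_nonempty y (S.erase x)
    have huv : insert y (S.erase x) ⊆ Icc u v := by
      intro z hz
      rcases mem_insert.1 hz with rfl | hz
      · exact mem_Icc.2 ⟨hu, hv⟩
      · exact mem_Icc.2 (hSuv z (mem_of_mem_erase hz) (ne_of_mem_erase hz))
    have hab : insert y (S.erase x) ⊆ Icc a b :=
      insert_subset (hIcc hy) ((erase_subset x S).trans hSab)
    rw [← card_insert_erase_of_mem_of_notMem hx hyS]
    exact ih _ ((max'_sub_min'_le_of_subset_Icc hne huv).trans_lt hlt) hne hab rfl
  have h₁ := hsign hi hhi lo (hi - 1) (by omega) (by omega) (by omega) fun z hz hne =>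
    have := mem_Icc.1 (hsub hz); ⟨this.1, by omega⟩
  have h₂ := hsign lo hlo (lo + 1) hi (by omega) (by omega) (by omega) fun z hz hne =>
    have := mem_Icc.1 (hsub hz); ⟨by omega, this.2⟩
  have key : (-1 : ℝ) ^ (#S - 1) * divDiff f S * ((hi : ℝ) - lo) =
      ((y : ℝ) - lo) * ((-1 : ℝ) ^ (#S - 1) * divDiff f (insert y (S.erase hi))) +
        ((hi : ℝ) - y) * ((-1 : ℝ) ^ (#S - 1) * divDiff f (insert y (S.erase lo))) := by
    linear_combination (-1 : ℝ) ^ (#S - 1) * divDiff_mul_sub_eq f hlo hhi hyS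
  have hloy' : (lo : ℝ) < y := by exact_mod_cast hloy
  have hyhi' : (y : ℝ) < hi := by exact_mod_cast hyhi
  refine nonneg_of_mul_nonneg_left ?_ (sub_pos.2 (hloy'.trans hyhi'))
  rw [key]
  exact add_nonneg (mul_nonneg (sub_nonneg.2 hloy'.le) h₁) (mul_nonneg (sub_nonneg.2 hyhi'.le) h₂)

noncomputable def newtonInterp (f : ℕ → ℝ) (y : ℕ → ℕ) (m x : ℕ) : ℝ :=
  ∑ k ∈ range m, divDiff f ((range (k + 1)).image y) * ∏ i ∈ range k, ((x : ℝ) - y i)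

lemma image_range_succ (y : ℕ → ℕ) (m : ℕ) :
    (range (m + 1)).image y = insert (y m) ((range m).image y) := by
  rw [range_add_one, image_insert]

theorem sub_newtonInterp (f : ℕ → ℝ) {y : ℕ → ℕ} {m : ℕ} (hy : Set.InjOn y (range m))
    (x : ℕ) :
    f x - newtonInterp f y m x =
      divDiff f (insert x ((range m).image y)) * ∏ i ∈ range m, ((x : ℝ) - y i) := by
  induction m with
  | zero => simp [newtonInterp, divDiff_singleton]
  | succ m ih =>
    have hym : y m ∉ (range m).image y := by
      simp only [mem_image, mem_range, not_exists, not_and]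
      intro i hi hyi
      exact hi.ne (hy (by simp; omega) (by simp) hyi)
    rw [newtonInterp, sum_range_succ, ← newtonInterp, ← sub_sub,
      ih (hy.mono (by simp [Set.subset_def]; omega)), prod_range_succ, image_range_succ]
    suffices h : ∏ i ∈ range m, ((x : ℝ) - y i) = 0 ∨
        divDiff f (insert x ((range m).image y)) - divDiff f (insert (y m) ((range m).image y)) =
          divDiff f (insert x (insert (y m) ((range m).image y))) * ((x : ℝ) - y m) by
      rcases h with h | h
      · simp [h]
      · linear_combination (∏ i ∈ range m, ((x : ℝ) - y i)) * h
    by_cases hx : x ∈ (range m).image y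
    · obtain ⟨i, hi, rfl⟩ := mem_image.1 hx
      exact Or.inl (prod_eq_zero hi (sub_self _))
    by_cases hxm : x = y m
    · subst hxm
      simp
    exact Or.inr (divDiff_insert_insert f hx hym hxm).symm

lemma newtonInterp_apply_self (f : ℕ → ℝ) {y : ℕ → ℕ} {m : ℕ} (hy : Set.InjOn y (range m))
    {j : ℕ} (hj : j < m) : newtonInterp f y m (y j) = f (y j) := by
  have := sub_newtonInterp f hy (y j)
  rwa [prod_eq_zero (mem_range.2 hj) (sub_self _), mul_zero, sub_eq_zero, eq_comm] at this

theorem newtonInterp_le {f : ℕ → ℝ} {a b : ℕ} (hf : CompletelyMonotonicOn f a b) {y : ℕ → ℕ}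
    {m : ℕ} (hy : Set.InjOn y (range m)) (hyab : ∀ i < m, y i ∈ Icc a b) {x : ℕ}
    (hx : x ∈ Icc a b) (hsign : 0 ≤ (-1 : ℝ) ^ m * ∏ i ∈ range m, ((x : ℝ) - y i)) :
    newtonInterp f y m x ≤ f x := by
  rw [← sub_nonneg, sub_newtonInterp f hy]
  by_cases hxY : x ∈ (range m).image y
  · obtain ⟨i, hi, rfl⟩ := mem_image.1 hxY
    have : ∏ j ∈ range m, ((y i : ℝ) - y j) = 0 := prod_eq_zero hi (sub_self _)
    rw [this, mul_zero]
  have hD := hf.neg_one_pow_mul_divDiff_nonneg (insert_nonempty x ((range m).image y))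
    (insert_subset hx fun z hz => by
      obtain ⟨i, hi, rfl⟩ := mem_image.1 hz
      exact hyab i (mem_range.1 hi))
  rw [card_insert_of_notMem hxY, card_image_of_injOn hy, card_range, Nat.add_sub_cancel] at hD
  calc (0 : ℝ) ≤ ((-1) ^ m * divDiff f (insert x ((range m).image y))) *
        ((-1) ^ m * ∏ i ∈ range m, ((x : ℝ) - y i)) := mul_nonneg hD hsign
    _ = _ := by rw [mul_mul_mul_comm, ← pow_add, Even.neg_one_pow ⟨m, rfl⟩, one_mul]

lemma neg_one_pow_mul_divDiff_image_range_nonneg {f : ℕ → ℝ} {a b : ℕ}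
    (hf : CompletelyMonotonicOn f a b) {y : ℕ → ℕ} {k : ℕ} (hy : Set.InjOn y (range (k + 1)))
    (hyab : ∀ i ≤ k, y i ∈ Icc a b) :
    0 ≤ (-1 : ℝ) ^ k * divDiff f ((range (k + 1)).image y) := by
  have := hf.neg_one_pow_mul_divDiff_nonneg ((nonempty_range_add_one).image y) fun z hz => by
    obtain ⟨i, hi, rfl⟩ := mem_image.1 hz
    exact hyab i (Nat.lt_succ_iff.1 (mem_range.1 hi))
  rwa [card_image_of_injOn hy, card_range, Nat.add_sub_cancel] at this

lemma newtonInterp_eq_sum (f : ℕ → ℝ) (y : ℕ → ℕ) (m x : ℕ) :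
    newtonInterp f y m x = ∑ k ∈ range m,
      (-1 : ℝ) ^ k * divDiff f ((range (k + 1)).image y) * ∏ i ∈ range k, ((y i : ℝ) - x) := by
  refine sum_congr rfl fun k _ => ?_
  have := prod_neg (s := range k) fun i => ((y i : ℝ) - x)
  simp only [neg_sub, card_range] at this
  rw [this]
  ring

lemma prod_range_two_mul (g : ℕ → ℝ) (s : ℕ) :
    ∏ i ∈ range (2 * s), g i = ∏ i ∈ range s, (g (2 * i) * g (2 * i + 1)) := by
  induction s with
  | zero => simp
  | succ s ih => rw [mul_add_one, prod_range_succ, prod_range_succ, prod_range_succ, ih, mul_assoc]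

lemma sub_mul_sub_add_one_nonneg (x c : ℕ) : 0 ≤ ((x : ℝ) - c) * ((x : ℝ) - (c + 1)) := by
  rcases le_or_gt x c with h | h
  · have : (x : ℝ) ≤ c := by exact_mod_cast h
    nlinarith
  · have : (c : ℝ) + 1 ≤ x := by exact_mod_cast h
    nlinarith

theorem IsPairCovering.neg_one_pow_mul_prod_nonneg {n t : ℕ} {A : ℕ → ℝ} {b : ℕ → ℕ}
    (hcov : IsPairCovering n t A b) {x : ℕ} (hx : x ≤ n) :
    0 ≤ (-1 : ℝ) ^ t * ∏ i ∈ range t, ((x : ℝ) - b i) := by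
  have hpairs : ∀ s, 2 * s ≤ t → 0 ≤ ∏ i ∈ range (2 * s), ((x : ℝ) - b i) := fun s hs => by
    rw [prod_range_two_mul]
    refine prod_nonneg fun i hi => ?_
    rw [← hcov.pairs i (by simp at hi; omega), Nat.cast_add_one]
    exact sub_mul_sub_add_one_nonneg x (b (2 * i))
  obtain ⟨s, rfl | rfl⟩ := t.even_or_odd'
  · rw [pow_mul, neg_one_sq, one_pow, one_mul]
    exact hpairs s le_rfl
  · have hlast : b (2 * s) = n := hcov.odd_end (odd_two_mul_add_one s)
    have hxn : (x : ℝ) ≤ n := by exact_mod_cast hx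
    rw [pow_succ, pow_mul, neg_one_sq, one_pow, one_mul, prod_range_succ, hlast, neg_one_mul,
      neg_nonneg]
    exact mul_nonpos_of_nonneg_of_nonpos (hpairs s (by omega)) (by linarith)

theorem IsPairCovering.injOn_rev {n t : ℕ} {A : ℕ → ℝ} {b : ℕ → ℕ}
    (hcov : IsPairCovering n t A b) : Set.InjOn (fun i => b (t - 1 - i)) (range t) :=
  fun i hi j hj hij => by
    simp only [coe_range, Set.mem_Iio] at hi hj
    by_contra hne
    rcases Nat.lt_or_gt_of_ne hne with h | h
    · exact (hcov.mono (t - 1 - j) (t - 1 - i) (by omega) (by omega)).ne' hij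
    · exact (hcov.mono (t - 1 - i) (t - 1 - j) (by omega) (by omega)).ne hij

lemma IsPairCovering.exists_rev_eq_of_mem_supp {n t : ℕ} {A : ℕ → ℝ} {b : ℕ → ℕ}
    (hcov : IsPairCovering n t A b) {i : ℕ} (hi : i ∈ supp n A) : ∃ k < t, b (t - 1 - k) = i := by
  simp only [supp, mem_filter, mem_Icc] at hi
  obtain ⟨k, hk, rfl⟩ := hcov.covers i hi.1.1 hi.1.2 hi.2
  exact ⟨t - 1 - k, by omega, by rw [show t - 1 - (t - 1 - k) = k by omega]⟩

open Polynomial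

theorem eq_zero_of_natDegree_sum_C_mul_le {R : Type*} [CommRing R] [IsDomain R] {K : ℕ → R[X]}
    (hdeg : ∀ m, (K m).natDegree ≤ m) (hlead : ∀ m, (K m).coeff m ≠ 0) {e : ℕ → R} {d n : ℕ}
    (h : (∑ m ∈ range n, C (e m) * K m).natDegree ≤ d) {m : ℕ} (hmn : m < n) (hdm : d < m) :
    e m = 0 := by
  induction n with
  | zero => omega
  | succ n ih =>
    rw [sum_range_succ] at h
    have hlow : (∑ m ∈ range n, C (e m) * K m).coeff n = 0 := by
      rw [finsetSum_coeff]
      exact sum_eq_zero fun k hk => by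
        rw [coeff_C_mul, coeff_eq_zero_of_natDegree_lt ((hdeg k).trans_lt (mem_range.1 hk)),
          mul_zero]
    have hen : d < n → e n = 0 := fun hdn => by
      have := coeff_eq_zero_of_natDegree_lt (h.trans_lt hdn)
      rwa [coeff_add, hlow, zero_add, coeff_C_mul, mul_eq_zero, or_iff_left (hlead n)] at this
    rcases Nat.lt_succ_iff_lt_or_eq.1 hmn with hmn | rfl
    · refine ih ?_ hmn
      by_cases hdn : d < n
      · rwa [hen hdn, C_0, zero_mul, add_zero] at h
      · rw [← add_sub_cancel_right (∑ m ∈ range n, C (e m) * K m) (C (e n) * K n)]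
        exact (natDegree_sub_le _ _).trans
          (max_le h (((natDegree_C_mul_le _ _).trans (hdeg n)).trans (not_lt.1 hdn)))
    · exact hen hdm

lemma kraw_zero (n q x : ℕ) : kraw n q 0 x = 1 := by
  simp [kraw]

-- `descPochhammer ℝ j` is `j! • (X choose j)`, so this is `kraw n q m` as a polynomial in `x`.
noncomputable def krawPoly (n q m : ℕ) : ℝ[X] :=
  ∑ j ∈ range (m + 1),
    C ((-1) ^ j * ((q : ℝ) - 1) ^ (m - j) / (j.factorial * (m - j).factorial)) *
      (descPochhammer ℝ j * (descPochhammer ℝ (m - j)).comp (C (n : ℝ) - X))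

lemma eval_krawPoly {n x : ℕ} (hx : x ≤ n) (q m : ℕ) :
    (krawPoly n q m).eval (x : ℝ) = kraw n q m x := by
  rw [krawPoly, kraw, eval_finsetSum]
  refine sum_congr rfl fun j _ => ?_
  have hnx : (C (n : ℝ) - X).eval (x : ℝ) = ((n - x : ℕ) : ℝ) := by simp [Nat.cast_sub hx]
  rw [eval_mul, eval_C, eval_mul, eval_comp, hnx, descPochhammer_eval_eq_descFactorial,
    descPochhammer_eval_eq_descFactorial, Nat.descFactorial_eq_factorial_mul_choose,
    Nat.descFactorial_eq_factorial_mul_choose]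
  have := j.factorial_pos
  have := (m - j).factorial_pos
  push_cast
  field_simp

lemma natDegree_C_sub_X (a : ℝ) : (C a - X).natDegree = 1 := by
  rw [← neg_sub, natDegree_neg, natDegree_X_sub_C]

lemma natDegree_descPochhammer_comp (a : ℝ) (k : ℕ) :
    ((descPochhammer ℝ k).comp (C a - X)).natDegree = k := by
  rw [natDegree_comp, descPochhammer_natDegree, natDegree_C_sub_X, mul_one]

lemma leadingCoeff_descPochhammer_comp (a : ℝ) (k : ℕ) :
    ((descPochhammer ℝ k).comp (C a - X)).leadingCoeff = (-1) ^ k := by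
  rw [leadingCoeff_comp (by simp [natDegree_C_sub_X]), (monic_descPochhammer ℝ k).leadingCoeff,
    descPochhammer_natDegree, ← neg_sub, leadingCoeff_neg, leadingCoeff_X_sub_C, one_mul]

lemma natDegree_descPochhammer_mul_comp (a : ℝ) (j k : ℕ) :
    (descPochhammer ℝ j * (descPochhammer ℝ k).comp (C a - X)).natDegree = j + k := by
  rw [natDegree_mul' (by simp [leadingCoeff_descPochhammer_comp, monic_descPochhammer]),
    descPochhammer_natDegree, natDegree_descPochhammer_comp]

lemma coeff_descPochhammer_mul_comp (a : ℝ) (j k : ℕ) :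
    (descPochhammer ℝ j * (descPochhammer ℝ k).comp (C a - X)).coeff (j + k) = (-1) ^ k := by
  have := coeff_mul_degree_add_degree (descPochhammer ℝ j) ((descPochhammer ℝ k).comp (C a - X))
  rwa [descPochhammer_natDegree, natDegree_descPochhammer_comp, leadingCoeff_descPochhammer_comp,
    (monic_descPochhammer ℝ j).leadingCoeff, one_mul] at this

lemma natDegree_krawPoly_le (n q m : ℕ) : (krawPoly n q m).natDegree ≤ m := by
  refine natDegree_sum_le_of_forall_le _ _ fun j hj => (natDegree_C_mul_le _ _).trans ?_
  rw [natDegree_descPochhammer_mul_comp, Nat.add_sub_cancel' (Nat.lt_succ_iff.1 (mem_range.1 hj))]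

lemma coeff_krawPoly_self_ne_zero {q : ℕ} (hq : 1 ≤ q) (n m : ℕ) :
    (krawPoly n q m).coeff m ≠ 0 := by
  have hq' : (0 : ℝ) ≤ q - 1 := by simp [hq]
  have hcoeff : (krawPoly n q m).coeff m = (-1) ^ m *
      ∑ j ∈ range (m + 1), ((q : ℝ) - 1) ^ (m - j) / (j.factorial * (m - j).factorial) := by
    rw [krawPoly, finsetSum_coeff, mul_sum]
    refine sum_congr rfl fun j hj => ?_
    have hjm := Nat.lt_succ_iff.1 (mem_range.1 hj)
    have h := coeff_descPochhammer_mul_comp (n : ℝ) j (m - j)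
    rw [Nat.add_sub_cancel' hjm] at h
    rw [coeff_C_mul, h,
      show (-1 : ℝ) ^ m = (-1) ^ j * (-1) ^ (m - j) by rw [← pow_add, Nat.add_sub_cancel' hjm]]
    ring
  rw [hcoeff]
  exact mul_ne_zero (pow_ne_zero _ (by norm_num))
    (sum_pos' (fun j _ => by positivity) ⟨m, by simp, by simp; positivity⟩).ne'

theorem eq_zero_of_sum_mul_kraw_eq_eval {n q : ℕ} (hq : 1 ≤ q) {e : ℕ → ℝ} {p : ℝ[X]}
    (h : ∀ x ≤ n, ∑ j ∈ range (n + 1), e j * kraw n q j x = p.eval (x : ℝ)) {j : ℕ}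
    (hjn : j ≤ n) (hpj : p.natDegree < j) : e j = 0 := by
  have hpoly : ∑ j ∈ range (n + 1), C (e j) * krawPoly n q j = p := by
    refine eq_of_natDegree_lt_card_of_eval_eq' _ _ ((range (n + 1)).image (↑)) ?_ ?_
    · simp only [mem_image, mem_range, forall_exists_index, and_imp, forall_apply_eq_imp_iff₂]
      intro x hx
      rw [← h x (by omega), eval_finsetSum]
      simp [eval_krawPoly (show x ≤ n by omega)]
    · rw [card_image_of_injective _ Nat.cast_injective, card_range, max_lt_iff]
      exact ⟨(natDegree_sum_le_of_forall_le _ _ fun k hk =>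
        (natDegree_C_mul_le _ _).trans ((natDegree_krawPoly_le n q k).trans
          (Nat.lt_succ_iff.1 (mem_range.1 hk)))).trans_lt (Nat.lt_succ_self n), by omega⟩
  exact eq_zero_of_natDegree_sum_C_mul_le (natDegree_krawPoly_le n q)
    (coeff_krawPoly_self_ne_zero hq n) (congrArg natDegree hpoly).le (Nat.lt_succ_of_le hjn) hpj

lemma natDegree_prod_C_sub_X_le (y : ℕ → ℕ) (k : ℕ) :
    (∏ i ∈ range k, (C (y i : ℝ) - X)).natDegree ≤ k :=
  (natDegree_prod_le _ _).trans
    ((sum_le_sum fun i _ => (natDegree_C_sub_X _).le).trans (by simp))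

noncomputable def energy (n : ℕ) (f A : ℕ → ℝ) : ℝ := ∑ i ∈ range (n + 1), f i * A i

lemma energy_sum_mul {ι : Type*} (s : Finset ι) (w : ι → ℝ) (g : ι → ℕ → ℝ) (n : ℕ)
    (X : ℕ → ℝ) :
    energy n (fun x => ∑ k ∈ s, w k * g k x) X = ∑ k ∈ s, w k * energy n (g k) X := by
  simp only [energy, sum_mul, mul_sum, mul_assoc]
  exact sum_comm

lemma energy_congr {n : ℕ} {f g : ℕ → ℝ} (h : ∀ i ≤ n, f i = g i) (X : ℕ → ℝ) :
    energy n f X = energy n g X :=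
  sum_congr rfl fun i hi => by rw [h i (Nat.lt_succ_iff.1 (mem_range.1 hi))]

lemma energy_kraw (n q j : ℕ) (X : ℕ → ℝ) :
    energy n (kraw n q j) X = ∑ i ∈ range (n + 1), X i * kraw n q j i :=
  sum_congr rfl fun _ _ => mul_comm _ _

theorem energy_sum_mul_le {ι : Type*} {s : Finset ι} {w : ι → ℝ} {g : ι → ℕ → ℝ} {n : ℕ}
    {A B : ℕ → ℝ} (hw : ∀ k ∈ s, 0 ≤ w k) (hg : ∀ k ∈ s, energy n (g k) A ≤ energy n (g k) B) :
    energy n (fun x => ∑ k ∈ s, w k * g k x) A ≤ energy n (fun x => ∑ k ∈ s, w k * g k x) B := by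
  rw [energy_sum_mul, energy_sum_mul]
  exact sum_le_sum fun k hk => mul_le_mul_of_nonneg_left (hg k hk) (hw k hk)

theorem energy_le_of_minorant {n : ℕ} {f g A B : ℕ → ℝ} (hA0 : A 0 = 1) (hB0 : B 0 = 1)
    (hB : ∀ i ≤ n, 0 ≤ B i) (hgf : ∀ i ≤ n, g i ≤ f i) (hfg : ∀ i ∈ supp n A, f i = g i)
    (hg : energy n g A ≤ energy n g B) : energy n f A ≤ energy n f B := by
  have hdiff : ∀ X, energy n f X - energy n g X = ∑ i ∈ range (n + 1), (f i - g i) * X i :=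
    fun X => by simp only [energy, ← sum_sub_distrib, sub_mul]
  have hA : ∑ i ∈ range (n + 1), (f i - g i) * A i = f 0 - g 0 := by
    rw [sum_eq_single 0 (fun i hi hi0 => ?_) (by simp), hA0, mul_one]
    by_cases hAi : A i = 0
    · rw [hAi, mul_zero]
    · rw [hfg i (by simp [supp, hAi]; simp at hi; omega), sub_self, zero_mul]
  have hB : f 0 - g 0 ≤ ∑ i ∈ range (n + 1), (f i - g i) * B i := by
    have := single_le_sum (f := fun i => (f i - g i) * B i) (fun i hi =>
      mul_nonneg (sub_nonneg.2 (hgf i (Nat.lt_succ_iff.1 (mem_range.1 hi))))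
        (hB i (Nat.lt_succ_iff.1 (mem_range.1 hi)))) (mem_range.2 n.succ_pos)
    rwa [hB0, mul_one] at this
  linarith [hdiff A, hdiff B]

theorem energy_le_of_positiveDefinite {q n s : ℕ} (hq : 1 ≤ q) {N : ℝ} {A B : ℕ → ℝ}
    (hA : IsQuasicode q n N A) (hdesign : IsDesign q n s A) (hB : IsQuasicode q n N B)
    {g : ℕ → ℝ} (hg : PositiveDefinite q n g) {p : ℝ[X]} (hgp : ∀ x ≤ n, g x = p.eval (x : ℝ))
    (hps : p.natDegree ≤ s) : energy n g A ≤ energy n g B := by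
  obtain ⟨e, he, hge⟩ := hg
  have hexp : ∀ X, energy n g X =
      ∑ j ∈ range (n + 1), e j * ∑ i ∈ range (n + 1), X i * kraw n q j i := fun X => by
    simp only [energy_congr hge, energy_sum_mul, energy_kraw]
  have hzero : ∀ X, IsQuasicode q n N X → ∑ i ∈ range (n + 1), X i * kraw n q 0 i = N :=
    fun X hX => by simp [kraw_zero, hX.size]
  rw [hexp, hexp]
  calc ∑ j ∈ range (n + 1), e j * ∑ i ∈ range (n + 1), A i * kraw n q j i = e 0 * N := by
        rw [sum_eq_single 0 (fun j hj hj0 => ?_) (by simp), hzero A hA]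
        rcases le_or_gt j s with hjs | hjs
        · rw [hdesign j (Nat.pos_of_ne_zero hj0) hjs, mul_zero]
        · rw [eq_zero_of_sum_mul_kraw_eq_eval hq (fun x hx => (hge x hx).symm.trans (hgp x hx))
            (Nat.lt_succ_iff.1 (mem_range.1 hj)) (hps.trans_lt hjs), zero_mul]
    _ ≤ ∑ j ∈ range (n + 1), e j * ∑ i ∈ range (n + 1), B i * kraw n q j i := by
        rw [← hzero B hB]
        exact single_le_sum (f := fun j => e j * ∑ i ∈ range (n + 1), B i * kraw n q j i)
          (fun j hj => mul_nonneg (he j (Nat.lt_succ_iff.1 (mem_range.1 hj)))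
            (hB.delsarte j (Nat.lt_succ_iff.1 (mem_range.1 hj)))) (by simp)

theorem uo_of_pairCovering_design_pd_general {q n t : ℕ} (hq : 2 ≤ q)
    {N : ℝ} {A : ℕ → ℝ} (hA : IsQuasicode q n N A)
    (b : ℕ → ℕ) (hcov : IsPairCovering n t A b)
    (hdesign : IsDesign q n (t-1) A)
    (hpd : ∀ j, 1 ≤ j → j ≤ t - 1 →
      PositiveDefinite q n (fun x => ∏ i ∈ Finset.range j, ((b (t-1-i) : ℝ) - (x : ℝ)))) :
    IsUOQuasicode q n N A := by
  refine ⟨hA, fun f hf B hB => ?_⟩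
  set y : ℕ → ℕ := fun i => b (t - 1 - i)
  have hy : Set.InjOn y (range t) := hcov.injOn_rev
  have hyn : ∀ i < t, y i ∈ Icc 0 n := fun i hi =>
    mem_Icc.2 ⟨Nat.zero_le _, (hcov.mem (t - 1 - i) (by omega)).2⟩
  have hqk : ∀ k ∈ range t, energy n (fun x => ∏ i ∈ range k, ((y i : ℝ) - x)) A ≤
      energy n (fun x => ∏ i ∈ range k, ((y i : ℝ) - x)) B := fun k hk => by
    rw [mem_range] at hk
    rcases Nat.eq_zero_or_pos k with rfl | hk0
    · simp [energy, hA.size, hB.size]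
    exact energy_le_of_positiveDefinite (by omega) hA hdesign hB (hpd k hk0 (by omega))
      (p := ∏ i ∈ range k, (C (y i : ℝ) - X)) (fun x _ => by simp [eval_prod])
      ((natDegree_prod_C_sub_X_le y k).trans (by omega))
  refine energy_le_of_minorant hA.zeroth hB.zeroth hB.nonneg (g := newtonInterp f y t)
    (fun x hx => newtonInterp_le hf hy hyn (mem_Icc.2 ⟨Nat.zero_le x, hx⟩) ?_) (fun i hi => ?_) ?_
  · rw [prod_range_reflect (fun i => (x : ℝ) - b i)]
    exact hcov.neg_one_pow_mul_prod_nonneg hx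
  · obtain ⟨k, hk, rfl⟩ := hcov.exists_rev_eq_of_mem_supp hi
    exact (newtonInterp_apply_self f hy hk).symm
  rw [show newtonInterp f y t = _ from funext (newtonInterp_eq_sum f y t)]
  refine energy_sum_mul_le (fun k hk => ?_) hqk
  rw [mem_range] at hk
  exact neg_one_pow_mul_divDiff_image_range_nonneg hf
    (hy.mono (coe_subset.2 (range_subset_range.2 hk))) fun i hi => hyn i (by omega)

/-- Proposition 5.2: let `b` list a pair covering
`b_1 < ⋯ < b_t` (zero-indexed `b 0 < ⋯ < b (t-1)`) of the quasicode `A`.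
If `A` is a `(t−1)`-design and for each `1 ≤ j ≤ t−1` the function
`q_j(x) = ∏_{i=0}^{j−1} (b_{t−i} − x)` is positive definite, then `A` is a
universally optimal quasicode. -/
theorem uo_of_pairCovering_design_pd {q n t : ℕ} (hq : 2 ≤ q) (hn : 1 ≤ n)
    {N : ℝ} {A : ℕ → ℝ} (hA : IsQuasicode q n N A)
    (b : ℕ → ℕ) (hcov : IsPairCovering n t A b)
    (hdesign : IsDesign q n (t-1) A)
    (hpd : ∀ j, 1 ≤ j → j ≤ t - 1 →
      PositiveDefinite q n (fun x => ∏ i ∈ Finset.range j, ((b (t-1-i) : ℝ) - (x : ℝ)))) :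
    IsUOQuasicode q n N A :=
  uo_of_pairCovering_design_pd_general hq hA b hcov hdesign hpd
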